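/- arXiv:2011.01193 — 6 statements merged into one kernel-verified Lean document; each statement's English description precedes it below -/
import Mathlib

section
/- Let (E_λ)_{λ∈Γ} be a nested family of strongly invariant sequence spaces over a Banach space X, and let ℕ' ⊆ ℕ be such that both ℕ' and ℕ∖ℕ' are infinite. If x = (x_j)_{j=1}^∞ ∈ X^ℕ and x ∉ ⋃_{λ∈Γ} E_λ, then either the subsequence (x_j)_{j∈ℕ'} (indices taken in increasing order) does not belong to ⋃_{λ∈Γ} E_λ, or the subsequence (x_j)_{j∈ℕ∖ℕ'} does not belong to ⋃_{λ∈Γ} E_λ. -/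
/-- The zero-free version `x⁰` of a sequence: if `x` has infinitely many nonzero
coordinates, it enumerates them in increasing order of index; otherwise it is `0`. -/
noncomputable def zeroFree {X : Type*} [Zero X] (x : ℕ → X) : ℕ → X :=
  haveI := Classical.dec ({j | x j ≠ 0}.Infinite)
  if {j | x j ≠ 0}.Infinite then (fun k => x (Nat.nth (fun j => x j ≠ 0) k)) else 0

/-- An invariant sequence space over a Banach space `X`: an infinite-dimensional Banach
space of `X`-valued sequences satisfying (b1) and (b2) of Definition 2.1 of [BDFP]. -/
structure InvSeqSpace (𝕂 : Type*) [RCLike 𝕂] (X : Type*)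
    [NormedAddCommGroup X] [NormedSpace 𝕂 X] where
  carrier : Submodule 𝕂 (ℕ → X)
  nrm : (ℕ → X) → ℝ
  K : ℝ
  infinite_dim : ¬ Module.Finite 𝕂 carrier
  nrm_nonneg : ∀ x ∈ carrier, 0 ≤ nrm x
  nrm_eq_zero_iff : ∀ x ∈ carrier, (nrm x = 0 ↔ x = 0)
  nrm_add_le : ∀ x ∈ carrier, ∀ y ∈ carrier, nrm (x + y) ≤ nrm x + nrm y
  nrm_smul : ∀ (a : 𝕂), ∀ x ∈ carrier, nrm (a • x) = ‖a‖ * nrm x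
  complete : ∀ u : ℕ → (ℕ → X), (∀ n, u n ∈ carrier) →
    (∀ ε : ℝ, 0 < ε → ∃ N, ∀ m ≥ N, ∀ n ≥ N, nrm (u m - u n) < ε) →
    ∃ v ∈ carrier, ∀ ε : ℝ, 0 < ε → ∃ N, ∀ n ≥ N, nrm (u n - v) < ε
  zeroFree_mem_iff : ∀ x : ℕ → X, zeroFree x ≠ 0 → (x ∈ carrier ↔ zeroFree x ∈ carrier)
  nrm_le_K_mul : ∀ x : ℕ → X, zeroFree x ≠ 0 → x ∈ carrier → nrm x ≤ K * nrm (zeroFree x)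
  coord_le_nrm : ∀ x ∈ carrier, ∀ j, ‖x j‖ ≤ nrm x

/-- A strongly invariant sequence space: an invariant sequence space containing `c₀₀(X)`
and such that a sequence belongs to it iff all its subsequences do. -/
structure StrongInvSeqSpace (𝕂 : Type*) [RCLike 𝕂] (X : Type*)
    [NormedAddCommGroup X] [NormedSpace 𝕂 X] extends InvSeqSpace 𝕂 X where
  c00_subset : ∀ x : ℕ → X, (∃ N, ∀ j, N ≤ j → x j = 0) → x ∈ carrier
  mem_iff_subseq : ∀ x : ℕ → X,
    x ∈ carrier ↔ ∀ g : ℕ → ℕ, StrictMono g → (fun k => x (g k)) ∈ carrier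

/-- `f` is compatible with a sequence space `E` (Definition 2.3 of [NP]). -/
def Compatible (𝕂 : Type*) [RCLike 𝕂] {X Y : Type*}
    [NormedAddCommGroup X] [NormedSpace 𝕂 X] [NormedAddCommGroup Y] [NormedSpace 𝕂 Y]
    (f : X → Y) (E : Set (ℕ → Y)) : Prop :=
  f 0 = 0 ∧ ∀ (x : ℕ → X) (a : 𝕂), a ≠ 0 →
    (fun j => f (x j)) ∉ E → (fun j => f (a • x j)) ∉ E

/-- The set `G(E, f, (E_λ)_{λ∈Γ})`. -/
def Gset {𝕂 : Type*} [RCLike 𝕂] {X Y Γ : Type*}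
    [NormedAddCommGroup X] [NormedSpace 𝕂 X] [NormedAddCommGroup Y] [NormedSpace 𝕂 Y]
    (E : InvSeqSpace 𝕂 X) (f : X → Y) (F : Γ → StrongInvSeqSpace 𝕂 Y) : Set (ℕ → X) :=
  {x | x ∈ E.carrier ∧ (fun j => f (x j)) ∉ ⋃ lam, ((F lam).carrier : Set (ℕ → Y))}

/-- `W` is closed in the sequence space `E` (w.r.t. the metric induced by `E.nrm`). -/
def ClosedIn {𝕂 : Type*} [RCLike 𝕂] {X : Type*}
    [NormedAddCommGroup X] [NormedSpace 𝕂 X]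
    (E : InvSeqSpace 𝕂 X) (W : Set (ℕ → X)) : Prop :=
  ∀ x ∈ E.carrier, (∀ ε : ℝ, 0 < ε → ∃ y ∈ W, E.nrm (x - y) < ε) → x ∈ W

/-
The subsequence of `x` along an infinite `ℕ' ⊆ ℕ` and its zero-padding `1_{ℕ'} · x` have the same
zero-free version, so by (b1), or by `c₀₀(X) ⊆ E` when that version is `0`, a strongly invariant
space contains one iff it contains the other. If both subsequences lay in `⋃ E_λ`, nestedness would
put both paddings in a single `E_λ`, and with them their sum `x`.
-/

section ZeroFree

variable {X : Type*} [Zero X]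

lemma zeroFree_of_infinite {x : ℕ → X}
    (hx : (Function.support x).Infinite) :
    zeroFree x = fun k => x (Nat.nth (fun j => x j ≠ 0) k) :=
  if_pos hx

lemma zeroFree_of_finite {x : ℕ → X}
    (hx : (Function.support x).Finite) : zeroFree x = 0 :=
  if_neg (Set.not_infinite.2 hx)

lemma zeroFree_eq_zero_iff {x : ℕ → X} :
    zeroFree x = 0 ↔ (Function.support x).Finite := by
  refine ⟨fun h => ?_, zeroFree_of_finite⟩
  by_contra hx
  have h0 := congr_fun h 0
  rw [zeroFree_of_infinite hx] at h0
  exact Nat.nth_mem_of_infinite hx 0 h0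

lemma zeroFree_comp_of_support_subset {f : ℕ → ℕ} (hf : StrictMono f)
    {y : ℕ → X} (hy : Function.support y ⊆ Set.range f) :
    zeroFree (y ∘ f) = zeroFree y := by
  have hsupp : f '' Function.support (y ∘ f) = Function.support y := by
    rw [Function.support_comp_eq_preimage, Set.image_preimage_eq_of_subset hy]
  by_cases hfin : (Function.support (y ∘ f)).Finite
  · rw [zeroFree_of_finite hfin, zeroFree_of_finite (hsupp ▸ hfin.image f)]
  · have hinf : (Function.support y).Infinite :=
      hsupp ▸ (Set.infinite_image_iff hf.injective.injOn).2 hfin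
    rw [zeroFree_of_infinite hfin, zeroFree_of_infinite hinf]
    funext k
    exact congrArg y (Nat.nth_comp_of_strictMono hf (fun j hj => hy hj) fun h => absurd h hinf)

end ZeroFree

namespace StrongInvSeqSpace

variable {𝕂 X : Type*} [RCLike 𝕂] [NormedAddCommGroup X] [NormedSpace 𝕂 X]
  (E : StrongInvSeqSpace 𝕂 X)

lemma mem_of_support_finite {x : ℕ → X} (hx : (Function.support x).Finite) :
    x ∈ E.carrier := by
  obtain ⟨N, hN⟩ := hx.bddAbove
  exact E.c00_subset x ⟨N + 1, fun j hj => by_contra fun hxj => by linarith [hN hxj]⟩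

lemma mem_iff_of_zeroFree_eq {x y : ℕ → X} (h : zeroFree x = zeroFree y) :
    x ∈ E.carrier ↔ y ∈ E.carrier := by
  by_cases h0 : zeroFree x = 0
  · exact iff_of_true (E.mem_of_support_finite (zeroFree_eq_zero_iff.1 h0))
      (E.mem_of_support_finite (zeroFree_eq_zero_iff.1 (h ▸ h0)))
  · rw [E.zeroFree_mem_iff x h0, E.zeroFree_mem_iff y (h ▸ h0), h]

lemma indicator_mem_iff {S : Set ℕ} (hS : S.Infinite) {x : ℕ → X} :
    S.indicator x ∈ E.carrier ↔ (fun k => x (Nat.nth (fun j => j ∈ S) k)) ∈ E.carrier := by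
  have hnth : StrictMono (Nat.nth (fun j => j ∈ S)) := Nat.nth_strictMono hS
  have hsubseq :
      S.indicator x ∘ Nat.nth (fun j => j ∈ S) = fun k => x (Nat.nth (fun j => j ∈ S) k) :=
    funext fun k => Set.indicator_of_mem (Nat.nth_mem_of_infinite hS k) x
  have hsupp : Function.support (S.indicator x) ⊆ Set.range (Nat.nth (fun j => j ∈ S)) :=
    (Nat.range_nth_of_infinite hS).symm ▸ Set.support_indicator_subset
  rw [E.mem_iff_of_zeroFree_eq (zeroFree_comp_of_support_subset hnth hsupp).symm, hsubseq]

end StrongInvSeqSpace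

theorem subseq_not_mem_of_nested_general
    {𝕂 X Γ : Type*} [RCLike 𝕂]
    [NormedAddCommGroup X] [NormedSpace 𝕂 X]
    (F : Γ → StrongInvSeqSpace 𝕂 X)
    (hnested : ∀ l₁ l₂ : Γ,
      ((F l₁).carrier : Set (ℕ → X)) ⊆ ((F l₂).carrier : Set (ℕ → X)) ∨
      ((F l₂).carrier : Set (ℕ → X)) ⊆ ((F l₁).carrier : Set (ℕ → X)))
    (S : Set ℕ) (hS : S.Infinite) (hSc : Sᶜ.Infinite)
    (x : ℕ → X) (hx : x ∉ ⋃ lam, ((F lam).carrier : Set (ℕ → X))) :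
    (fun k => x (Nat.nth (fun j => j ∈ S) k)) ∉ ⋃ lam, ((F lam).carrier : Set (ℕ → X)) ∨
    (fun k => x (Nat.nth (fun j => j ∈ Sᶜ) k)) ∉ ⋃ lam, ((F lam).carrier : Set (ℕ → X)) := by
  by_contra! h
  obtain ⟨⟨l₁, h₁⟩, ⟨l₂, h₂⟩⟩ := And.imp Set.mem_iUnion.1 Set.mem_iUnion.1 h
  have mem_of_both_mem : ∀ l, (fun k => x (Nat.nth (fun j => j ∈ S) k)) ∈ (F l).carrier →
      (fun k => x (Nat.nth (fun j => j ∈ Sᶜ) k)) ∈ (F l).carrier → x ∈ (F l).carrier := by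
    intro l hl hlc
    rw [← Set.indicator_self_add_compl S x]
    exact add_mem (((F l).indicator_mem_iff hS).2 hl) (((F l).indicator_mem_iff hSc).2 hlc)
  refine hx (Set.mem_iUnion.2 ?_)
  rcases hnested l₁ l₂ with h₁₂ | h₂₁
  · exact ⟨l₂, mem_of_both_mem l₂ (h₁₂ h₁) h₂⟩
  · exact ⟨l₁, mem_of_both_mem l₁ h₁ (h₂₁ h₂)⟩

/-- **Lemma 2.2.** Let `(E_λ)_{λ∈Γ}` be a nested family of strongly invariant sequence
spaces and `ℕ' ⊆ ℕ` with `ℕ'` and `ℕ∖ℕ'` infinite. If `x ∉ ⋃_{λ∈Γ} E_λ`, then either the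
subsequence of `x` indexed by `ℕ'` or the one indexed by `ℕ∖ℕ'` is not in `⋃_{λ∈Γ} E_λ`. -/
theorem subseq_not_mem_of_nested
    {𝕂 X Γ : Type*} [RCLike 𝕂]
    [NormedAddCommGroup X] [NormedSpace 𝕂 X] [CompleteSpace X]
    (F : Γ → StrongInvSeqSpace 𝕂 X)
    (hnested : ∀ l₁ l₂ : Γ,
      ((F l₁).carrier : Set (ℕ → X)) ⊆ ((F l₂).carrier : Set (ℕ → X)) ∨
      ((F l₂).carrier : Set (ℕ → X)) ⊆ ((F l₁).carrier : Set (ℕ → X)))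
    (S : Set ℕ) (hS : S.Infinite) (hSc : Sᶜ.Infinite)
    (x : ℕ → X) (hx : x ∉ ⋃ lam, ((F lam).carrier : Set (ℕ → X))) :
    (fun k => x (Nat.nth (fun j => j ∈ S) k)) ∉ ⋃ lam, ((F lam).carrier : Set (ℕ → X)) ∨
    (fun k => x (Nat.nth (fun j => j ∈ Sᶜ) k)) ∉ ⋃ lam, ((F lam).carrier : Set (ℕ → X)) :=
  subseq_not_mem_of_nested_general F hnested S hS hSc x hx
end

section
/- Let X and Y be Banach spaces, Γ an arbitrary set, E an invariant sequence space over X, and E_λ a strongly invariant sequence space over Y for all λ ∈ Γ. If f : X → Y is compatible with E_λ for each λ ∈ Γ, then G(E, f, (E_λ)_{λ∈Γ}) is either empty or 𝔠-spaceable in E. -/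
/-!
If `Γ` is empty, `G` is all of `E`, and every infinite-dimensional Banach space has a closed
subspace of dimension `𝔠`: for a biorthogonal sequence `(vₙ, φₙ)` the vectors `∑ₙ cₙ rⁿ vₙ`,
`0 < r < 1`, are linearly independent, because up to the fixed factors `cₙ ≠ 0` their
coordinates `φᵢ` are the distinct characters `i ↦ rⁱ`; and the closed span of a sequence has at
most `𝔠` elements.

Otherwise pick `x ∈ G`. Since `c₀₀ ⊆ E_λ`, `x` has infinitely many nonzero coordinates, so by
(b1) the copies of `x` placed on the disjoint blocks `{pair i k | k ∈ ℕ}` of `ℕ` lie in `E`.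
Their closed span is `𝔠`-dimensional, and every element `w` of it is, on each block, a multiple
`a • x`. If `w ≠ 0`, some block has `a ≠ 0`; if `f ∘ w` were in some `E_λ`, so would be its
subsequence `f ∘ (a • x)`, hence `f ∘ x` by compatibility, contradicting `x ∈ G`.
-/

open Cardinal Set

lemma Cardinal.mk_closure_le_mk_nat_arrow {α : Type*} [TopologicalSpace α]
    [FrechetUrysohnSpace α] [T2Space α] (s : Set α) : #(closure s) ≤ #(ℕ → s) := by
  have hseq (y : closure s) :
      ∃ u : ℕ → s, Filter.Tendsto (fun n => (u n : α)) Filter.atTop (nhds y) := by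
    obtain ⟨u, hu, hlim⟩ := mem_closure_iff_seq_limit.mp y.2
    exact ⟨fun n => ⟨u n, hu n⟩, hlim⟩
  choose u hu using hseq
  refine mk_le_of_injective (f := u) fun y y' h => Subtype.ext ?_
  exact tendsto_nhds_unique (hu y) (by rw [h]; exact hu y')

lemma RCLike.mk_le_continuum (𝕂 : Type*) [RCLike 𝕂] : #𝕂 ≤ 𝔠 := by
  have : lift.{0} #𝕂 ≤ lift #(ℝ × ℝ) :=
    lift_mk_le'.mpr ⟨⟨fun a => (RCLike.re a, RCLike.im a),
      fun a b h => RCLike.ext (congrArg Prod.fst h) (congrArg Prod.snd h)⟩⟩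
  simpa [mk_real, mul_eq_self aleph0_le_continuum] using this

section Banach

variable {𝕂 V : Type*} [RCLike 𝕂] [NormedAddCommGroup V] [NormedSpace 𝕂 V]

lemma mk_span_range_le_continuum (v : ℕ → V) : #(Submodule.span 𝕂 (range v)) ≤ 𝔠 := by
  have hsurj : Function.Surjective (Finsupp.linearCombination 𝕂 v).rangeRestrict :=
    LinearMap.surjective_rangeRestrict _
  have h1 := lift_mk_le_lift_mk_of_surjective hsurj
  rw [Finsupp.range_linearCombination] at h1
  have h2 : #(ℕ →₀ 𝕂) ≤ 𝔠 := calc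
    #(ℕ →₀ 𝕂) ≤ #(ℕ → 𝕂) := mk_le_of_injective DFunLike.coe_injective
    _ ≤ 𝔠 := by simpa using power_le_power_right (c := ℵ₀) (RCLike.mk_le_continuum 𝕂)
  simpa using h1.trans (lift_le.mpr h2)

lemma rank_topologicalClosure_span_le_continuum (v : ℕ → V) :
    Module.rank 𝕂 (Submodule.span 𝕂 (range v)).topologicalClosure ≤ 𝔠 := calc
  _ ≤ #(Submodule.span 𝕂 (range v)).topologicalClosure := rank_le_card _ _
  _ ≤ #(ℕ → Submodule.span 𝕂 (range v)) := mk_closure_le_mk_nat_arrow (α := V) _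
  _ ≤ 𝔠 := by simpa using power_le_power_right (c := ℵ₀) (mk_span_range_le_continuum v)

lemma continuum_le_rank_topologicalClosure_span [CompleteSpace V] (v : ℕ → V)
    (φ : ℕ → StrongDual 𝕂 V) (hφ : ∀ i j, φ i (v j) = if i = j then 1 else 0) :
    𝔠 ≤ Module.rank 𝕂 (Submodule.span 𝕂 (range v)).topologicalClosure := by
  set W := (Submodule.span 𝕂 (range v)).topologicalClosure
  -- the damping factors `c n` make the series below converge whatever the norms of `v n` are
  set c : ℕ → 𝕂 := fun n => (((1 + ‖v n‖)⁻¹ : ℝ) : 𝕂) with hc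
  have hc0 (n : ℕ) : c n ≠ 0 := by
    simp only [hc, ne_eq, RCLike.ofReal_eq_zero, inv_eq_zero]; positivity
  have hsum (r : Ioo (0 : ℝ) 1) : Summable fun n => (c n * (r : 𝕂) ^ n) • v n := by
    refine .of_norm_bounded (summable_geometric_of_lt_one r.2.1.le r.2.2) fun n => ?_
    have : (1 + ‖v n‖)⁻¹ * ‖v n‖ ≤ 1 := by
      rw [inv_mul_le_one₀ (by positivity)]; linarith
    simp only [hc, norm_smul, norm_mul, norm_pow, RCLike.norm_ofReal, abs_of_pos r.2.1,
      abs_of_pos (inv_pos.mpr (by positivity : 0 < 1 + ‖v n‖))]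
    rw [mul_right_comm]
    exact mul_le_of_le_one_left (pow_nonneg r.2.1.le n) this
  set u : Ioo (0 : ℝ) 1 → V := fun r => ∑' n, (c n * (r : 𝕂) ^ n) • v n
  have hu_mem (r : Ioo (0 : ℝ) 1) : u r ∈ W :=
    mem_closure_of_tendsto (hsum r).hasSum.tendsto_sum_nat <| .of_forall fun n =>
      Submodule.sum_mem _ fun i _ => Submodule.smul_mem _ _ (Submodule.subset_span ⟨i, rfl⟩)
  have hφu (r : Ioo (0 : ℝ) 1) (i : ℕ) : φ i (u r) = c i * (r : 𝕂) ^ i := by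
    simp [u, (φ i).map_tsum (hsum r), hφ]
  let Φ : V →ₗ[𝕂] Multiplicative ℕ → 𝕂 :=
    LinearMap.pi fun m => (c m.toAdd)⁻¹ • (φ m.toAdd : V →ₗ[𝕂] 𝕂)
  have hΦu : Φ ∘ u = fun r : Ioo (0 : ℝ) 1 => ⇑(powersHom 𝕂 (r : 𝕂)) := by
    funext r m
    simp [Φ, hφu, inv_mul_cancel_left₀ (hc0 _)]
  have hli : LinearIndependent 𝕂 u := by
    refine LinearIndependent.of_comp Φ ?_
    rw [hΦu]
    exact (linearIndependent_monoidHom _ _).comp _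
      ((powersHom 𝕂).injective.comp (RCLike.ofReal_injective.comp Subtype.val_injective))
  have hliW : LinearIndependent 𝕂 fun r => (⟨u r, hu_mem r⟩ : W) := .of_comp W.subtype hli
  simpa [mk_Ioo_real] using hliW.cardinal_lift_le_rank

lemma rank_topologicalClosure_span_eq_continuum [CompleteSpace V] (v : ℕ → V)
    (φ : ℕ → StrongDual 𝕂 V) (hφ : ∀ i j, φ i (v j) = if i = j then 1 else 0) :
    Module.rank 𝕂 (Submodule.span 𝕂 (range v)).topologicalClosure = 𝔠 :=
  (rank_topologicalClosure_span_le_continuum v).antisymm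
    (continuum_le_rank_topologicalClosure_span v φ hφ)

lemma exists_dual_pair_biorthogonal_to_finset (hV : ¬ FiniteDimensional 𝕂 V)
    (s : Finset (V × StrongDual 𝕂 V)) :
    ∃ q : V × StrongDual 𝕂 V, q.2 q.1 = 1 ∧ ∀ p ∈ s, p.2 q.1 = 0 ∧ q.2 p.1 = 0 := by
  set U := Submodule.span 𝕂 (Prod.fst '' (s : Set (V × StrongDual 𝕂 V)))
  have : FiniteDimensional 𝕂 U := .span_of_finite 𝕂 (s.finite_toSet.image _)
  set Φ : V →ₗ[𝕂] s → 𝕂 := LinearMap.pi fun p => (p.1.2 : V →ₗ[𝕂] 𝕂)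
  -- `ker Φ` has finite codimension, so it cannot lie in the finite-dimensional `U`
  obtain ⟨v, hvΦ, hvU⟩ : ∃ v ∈ LinearMap.ker Φ, v ∉ U := by
    by_contra! h
    have : FiniteDimensional 𝕂 (LinearMap.ker Φ) := Submodule.finiteDimensional_of_le h
    have : Module.Finite 𝕂 (V ⧸ LinearMap.ker Φ) := Submodule.CoFG.ker Φ
    exact hV (.of_submodule_quotient (LinearMap.ker Φ))
  have : IsClosed (U : Set V) := Submodule.closed_of_finiteDimensional U
  obtain ⟨ψ, hψ⟩ := SeparatingDual.exists_eq_one (R := 𝕂)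
    (x := (Submodule.Quotient.mk v : V ⧸ U)) (by simpa using hvU)
  refine ⟨(v, ψ.comp U.mkQL), hψ, fun p hp => ⟨?_, ?_⟩⟩
  · exact congrFun (LinearMap.mem_ker.mp hvΦ) ⟨p, hp⟩
  · have : p.1 ∈ U := Submodule.subset_span ⟨p, hp, rfl⟩
    simp [(Submodule.Quotient.mk_eq_zero U).mpr this]

lemma exists_biorthogonal_seq (hV : ¬ FiniteDimensional 𝕂 V) :
    ∃ (v : ℕ → V) (φ : ℕ → StrongDual 𝕂 V), ∀ i j, φ i (v j) = if i = j then 1 else 0 := by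
  obtain ⟨p, hp1, hp0⟩ := exists_seq_of_forall_finset_exists
    (fun q : V × StrongDual 𝕂 V => q.2 q.1 = 1) (fun p q => p.2 q.1 = 0 ∧ q.2 p.1 = 0)
    fun s _ => exists_dual_pair_biorthogonal_to_finset hV s
  refine ⟨fun n => (p n).1, fun n => (p n).2, fun i j => ?_⟩
  rcases lt_trichotomy i j with h | rfl | h
  · simp [(hp0 i j h).1, h.ne]
  · simp [hp1]
  · simp [(hp0 j i h).2, h.ne']

end Banach

section ZeroFree

variable {X : Type*} [Zero X]

lemma zeroFree_ne_zero_iff {x : ℕ → X} : zeroFree x ≠ 0 ↔ {j | x j ≠ 0}.Infinite := by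
  refine ⟨fun h hfin => h (by simp [zeroFree, hfin]), fun h h0 => ?_⟩
  have : x (Nat.nth (fun j => x j ≠ 0) 0) = 0 := by simpa [zeroFree, h] using congrFun h0 0
  exact Nat.nth_mem_of_infinite h 0 this

lemma zeroFree_comp_strictMono {x : ℕ → X} {ν : ℕ → ℕ} (hν : StrictMono ν)
    (hx : ∀ j, x j ≠ 0 → j ∈ range ν) : zeroFree (x ∘ ν) = zeroFree x := by
  have himage : {j | x j ≠ 0} = ν '' {k | x (ν k) ≠ 0} := by
    ext j
    refine ⟨fun hj => ?_, fun ⟨k, hk, hkj⟩ => hkj ▸ hk⟩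
    obtain ⟨k, rfl⟩ := hx j hj
    exact ⟨k, hj, rfl⟩
  have hinf : {k | x (ν k) ≠ 0}.Infinite ↔ {j | x j ≠ 0}.Infinite := by
    rw [himage, infinite_image_iff hν.injective.injOn]
  by_cases h : {j | x j ≠ 0}.Infinite
  · funext k
    simp only [zeroFree, Function.comp_apply, hinf.mpr h, h, if_true]
    exact congrArg x (Nat.nth_comp_of_strictMono hν hx fun hf => absurd hf h)
  · simp only [zeroFree, Function.comp_apply, h, mt hinf.mp h, if_false]

def onBlock (x : ℕ → X) (i : ℕ) : ℕ → X :=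
  fun j => if (Nat.unpair j).1 = i then x (Nat.unpair j).2 else 0

lemma onBlock_pair (x : ℕ → X) (i i' k : ℕ) :
    onBlock x i (Nat.pair i' k) = if i' = i then x k else 0 := by
  simp [onBlock]

lemma zeroFree_onBlock (x : ℕ → X) (i : ℕ) : zeroFree (onBlock x i) = zeroFree x := by
  have hsupp (j : ℕ) (hj : onBlock x i j ≠ 0) : j ∈ range (Nat.pair i) := by
    by_cases h : (Nat.unpair j).1 = i
    · exact ⟨(Nat.unpair j).2, by rw [← h, Nat.pair_unpair]⟩
    · exact absurd (by simp [onBlock, h]) hj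
  have := zeroFree_comp_strictMono (fun _ _ => Nat.pair_lt_pair_right i) hsupp
  rw [show onBlock x i ∘ Nat.pair i = x from funext fun k => by simp [onBlock_pair]] at this
  exact this.symm

end ZeroFree

namespace StrongInvSeqSpace

variable {𝕂 X Y : Type*} [RCLike 𝕂] [NormedAddCommGroup X] [NormedSpace 𝕂 X]
  [NormedAddCommGroup Y] [NormedSpace 𝕂 Y] (F : StrongInvSeqSpace 𝕂 Y)

lemma mem_of_finite_support {y : ℕ → Y} (hy : {j | y j ≠ 0}.Finite) : y ∈ F.carrier := by
  obtain ⟨N, hN⟩ := hy.bddAbove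
  refine F.c00_subset y ⟨N + 1, fun j hj => ?_⟩
  by_contra h
  exact absurd (hN h) (by omega)

lemma comp_mem_of_subseq_eq_smul {f : X → Y} (hf : Compatible 𝕂 f F.carrier) {w x : ℕ → X}
    {g : ℕ → ℕ} (hg : StrictMono g) {a : 𝕂} (ha : a ≠ 0) (hw : ∀ k, w (g k) = a • x k)
    (hfw : (fun j => f (w j)) ∈ F.carrier) : (fun j => f (x j)) ∈ F.carrier := by
  by_contra hfx
  refine hf.2 x a ha hfx ?_
  simpa only [hw, SetLike.mem_coe] using (F.mem_iff_subseq _).mp hfw g hg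

end StrongInvSeqSpace

namespace InvSeqSpace

variable {𝕂 X : Type*} [RCLike 𝕂] [NormedAddCommGroup X] [NormedSpace 𝕂 X]
  (E : InvSeqSpace 𝕂 X)

-- A type synonym: the subtype `E.carrier` already carries the product topology of `ℕ → X`.
def Space : Type _ := E.carrier

instance : AddCommGroup E.Space := inferInstanceAs (AddCommGroup E.carrier)
instance : Module 𝕂 E.Space := inferInstanceAs (Module 𝕂 E.carrier)

def toSeq : E.Space →ₗ[𝕂] ℕ → X := E.carrier.subtype

lemma toSeq_mem (w : E.Space) : E.toSeq w ∈ E.carrier := Subtype.prop (p := (· ∈ E.carrier)) w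

lemma toSeq_injective : Function.Injective E.toSeq := Subtype.val_injective

def Space.mk (x : ℕ → X) (hx : x ∈ E.carrier) : E.Space := (⟨x, hx⟩ : E.carrier)

@[simp] lemma toSeq_mk (x : ℕ → X) (hx : x ∈ E.carrier) : E.toSeq (Space.mk E x hx) = x := rfl

noncomputable instance : NormedAddCommGroup E.Space :=
  AddGroupNorm.toNormedAddCommGroup
    { toFun := fun w => E.nrm (E.toSeq w)
      map_zero' := by simpa using (E.nrm_eq_zero_iff 0 (zero_mem _)).mpr rfl
      add_le' := fun v w => by simpa using E.nrm_add_le _ (E.toSeq_mem v) _ (E.toSeq_mem w)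
      neg' := fun w => by simpa using E.nrm_smul (-1) _ (E.toSeq_mem w)
      eq_zero_of_map_eq_zero' := fun w h =>
        E.toSeq_injective (by simpa using (E.nrm_eq_zero_iff _ (E.toSeq_mem w)).mp h) }

variable {E} in
lemma norm_def (w : E.Space) : ‖w‖ = E.nrm (E.toSeq w) := rfl

noncomputable instance : NormedSpace 𝕂 E.Space where
  norm_smul_le a w := by simp [norm_def, E.nrm_smul a _ (E.toSeq_mem w)]

instance : CompleteSpace E.Space := by
  refine Metric.complete_of_cauchySeq_tendsto fun u hu => ?_
  obtain ⟨v, hv, hlim⟩ := E.complete (fun n => E.toSeq (u n)) (fun n => E.toSeq_mem _)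
    fun ε hε => by simpa [dist_eq_norm, norm_def] using Metric.cauchySeq_iff.mp hu ε hε
  exact ⟨Space.mk E v hv, Metric.tendsto_atTop.mpr fun ε hε => by
    simpa [dist_eq_norm, norm_def] using hlim ε hε⟩

noncomputable def coordCLM (j : ℕ) : E.Space →L[𝕂] X :=
  (LinearMap.proj j ∘ₗ E.toSeq).mkContinuous 1 fun w => by
    simpa [norm_def] using E.coord_le_nrm _ (E.toSeq_mem w) j

@[simp] lemma coordCLM_apply (j : ℕ) (w : E.Space) : E.coordCLM j w = E.toSeq w j := rfl

-- `A` is `𝔠`-spaceable in `E` when `A ∪ {0}` is `ContinuumSpaceable`.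
def ContinuumSpaceable (S : Set (ℕ → X)) : Prop :=
  ∃ W : Submodule 𝕂 (ℕ → X), (W : Set (ℕ → X)) ⊆ E.carrier ∧ ClosedIn E W ∧
    Module.rank 𝕂 W = 𝔠 ∧ (W : Set (ℕ → X)) ⊆ S

variable {E}

lemma ContinuumSpaceable.mono {S T : Set (ℕ → X)} (h : E.ContinuumSpaceable S)
    (hST : ∀ w ∈ E.carrier, w ∈ S → w ∈ T) : E.ContinuumSpaceable T := by
  obtain ⟨W, hWE, hWc, hWr, hWS⟩ := h
  exact ⟨W, hWE, hWc, hWr, fun w hw => hST w (hWE hw) (hWS hw)⟩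

lemma continuumSpaceable_of_isClosed {S : Set (ℕ → X)} (W : Submodule 𝕂 E.Space)
    (hW : IsClosed (W : Set E.Space)) (hrank : Module.rank 𝕂 W = 𝔠)
    (hS : ∀ w ∈ W, E.toSeq w ∈ S) : E.ContinuumSpaceable S := by
  refine ⟨W.map E.toSeq, ?_, fun x hx happrox => ?_, ?_, ?_⟩
  · rintro _ ⟨w, -, rfl⟩
    exact E.toSeq_mem w
  · have : Space.mk E x hx ∈ closure (W : Set E.Space) :=
      Metric.mem_closure_iff.mpr fun ε hε => by
        obtain ⟨_, ⟨w, hw, rfl⟩, hlt⟩ := happrox ε hε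
        exact ⟨w, hw, by simpa [dist_eq_norm, norm_def] using hlt⟩
    exact ⟨_, hW.closure_eq ▸ this, rfl⟩
  · rw [← hrank]
    exact (Submodule.equivMapOfInjective _ E.toSeq_injective W).symm.rank_eq
  · rintro _ ⟨w, hw, rfl⟩
    exact hS w hw

variable (E) in
lemma continuumSpaceable_carrier : E.ContinuumSpaceable E.carrier := by
  obtain ⟨v, φ, hφ⟩ := exists_biorthogonal_seq (V := E.Space) E.infinite_dim
  exact continuumSpaceable_of_isClosed _ (Submodule.isClosed_topologicalClosure _)
    (rank_topologicalClosure_span_eq_continuum v φ hφ) fun w _ => E.toSeq_mem w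

lemma onBlock_mem {x : ℕ → X} (hxE : x ∈ E.carrier) (hx : {j | x j ≠ 0}.Infinite) (i : ℕ) :
    onBlock x i ∈ E.carrier := by
  have h0 : zeroFree (onBlock x i) ≠ 0 := by rwa [zeroFree_onBlock, zeroFree_ne_zero_iff]
  rwa [E.zeroFree_mem_iff _ h0, zeroFree_onBlock,
    ← E.zeroFree_mem_iff _ (zeroFree_ne_zero_iff.mpr hx)]

variable (E) in
def blockMultiples (x : ℕ → X) (ψ : StrongDual 𝕂 X) (k₀ : ℕ) : Submodule 𝕂 E.Space where
  carrier := {w | ∀ i k, E.toSeq w (Nat.pair i k) = ψ (E.toSeq w (Nat.pair i k₀)) • x k}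
  add_mem' hv hw i k := by simp [hv i k, hw i k, add_smul]
  zero_mem' i k := by simp
  smul_mem' a w hw i k := by simp [hw i k, smul_smul]

lemma isClosed_blockMultiples (x : ℕ → X) (ψ : StrongDual 𝕂 X) (k₀ : ℕ) :
    IsClosed (E.blockMultiples x ψ k₀ : Set E.Space) := by
  simp only [blockMultiples, Submodule.coe_set_mk, AddSubmonoid.coe_set_mk,
    AddSubsemigroup.coe_set_mk, ofPred_forall]
  exact isClosed_iInter fun i => isClosed_iInter fun k => isClosed_eq (E.coordCLM _).continuous
    ((ψ.continuous.comp (E.coordCLM _).continuous).smul continuous_const)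

lemma continuumSpaceable_blockMultiples {x : ℕ → X} (hxE : x ∈ E.carrier)
    (hx : {j | x j ≠ 0}.Infinite) :
    E.ContinuumSpaceable {w | ∀ i, ∃ a : 𝕂, ∀ k, w (Nat.pair i k) = a • x k} := by
  obtain ⟨k₀, hk₀⟩ := hx.nonempty
  obtain ⟨ψ, hψ⟩ := SeparatingDual.exists_eq_one (R := 𝕂) hk₀
  let v (i : ℕ) : E.Space := Space.mk E (onBlock x i) (onBlock_mem hxE hx i)
  have hφ (i j : ℕ) : ψ.comp (E.coordCLM (Nat.pair i k₀)) (v j) = if i = j then 1 else 0 := by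
    by_cases h : i = j <;> simp [v, onBlock_pair, h, hψ]
  have hvB : Submodule.span 𝕂 (range v) ≤ E.blockMultiples x ψ k₀ := by
    rw [Submodule.span_le]
    rintro _ ⟨j, rfl⟩ i k
    by_cases h : i = j <;> simp [v, onBlock_pair, h, hψ]
  refine continuumSpaceable_of_isClosed _ (Submodule.isClosed_topologicalClosure _)
    (rank_topologicalClosure_span_eq_continuum v _ hφ) fun w hw i =>
      ⟨_, Submodule.topologicalClosure_minimal _ hvB (isClosed_blockMultiples x ψ k₀) hw i⟩

end InvSeqSpace

theorem continuum_spaceable_Gset_general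
    {𝕂 X Y Γ : Type*} [RCLike 𝕂]
    [NormedAddCommGroup X] [NormedSpace 𝕂 X]
    [NormedAddCommGroup Y] [NormedSpace 𝕂 Y]
    (E : InvSeqSpace 𝕂 X) (F : Γ → StrongInvSeqSpace 𝕂 Y) (f : X → Y)
    (hcomp : ∀ lam : Γ, Compatible 𝕂 f ((F lam).carrier : Set (ℕ → Y))) :
    Gset E f F = ∅ ∨
      ∃ W : Submodule 𝕂 (ℕ → X),
        (W : Set (ℕ → X)) ⊆ (E.carrier : Set (ℕ → X)) ∧
        ClosedIn E (W : Set (ℕ → X)) ∧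
        Module.rank 𝕂 ↥W = Cardinal.continuum ∧
        (W : Set (ℕ → X)) ⊆ Gset E f F ∪ {0} := by
  rcases (Gset E f F).eq_empty_or_nonempty with hG | ⟨x, hxE, hxG⟩
  · exact Or.inl hG
  right
  show E.ContinuumSpaceable (Gset E f F ∪ {0})
  rcases isEmpty_or_nonempty Γ with hΓ | ⟨⟨lam₀⟩⟩
  · exact E.continuumSpaceable_carrier.mono fun w hw _ => Or.inl ⟨hw, by simp⟩
  have hx : {j | x j ≠ 0}.Infinite := by
    intro hfin
    have hfx : {j | f (x j) ≠ 0}.Finite :=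
      hfin.subset fun j hj hxj => hj (by simp [hxj, (hcomp lam₀).1])
    exact hxG (mem_iUnion.mpr ⟨lam₀, (F lam₀).mem_of_finite_support hfx⟩)
  refine (E.continuumSpaceable_blockMultiples hxE hx).mono fun w hwE hblock => ?_
  by_cases hw0 : w = 0
  · exact Or.inr hw0
  obtain ⟨j, hj⟩ := Function.ne_iff.mp hw0
  obtain ⟨a, ha⟩ := hblock (Nat.unpair j).1
  have ha0 : a ≠ 0 := by
    rintro rfl
    exact hj (by simpa using ha (Nat.unpair j).2)
  refine Or.inl ⟨hwE, fun hfw => ?_⟩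
  obtain ⟨lam, hlam⟩ := mem_iUnion.mp hfw
  exact hxG (mem_iUnion.mpr ⟨lam, (F lam).comp_mem_of_subseq_eq_smul (hcomp lam)
    (fun _ _ => Nat.pair_lt_pair_right _) ha0 ha hlam⟩)

/-- **Theorem 2.5 of [NP].** If `f` is compatible with every `E_λ`, then
`G(E, f, (E_λ)_{λ∈Γ})` is either empty or `𝔠`-spaceable in `E`. -/
theorem continuum_spaceable_Gset
    {𝕂 X Y Γ : Type*} [RCLike 𝕂]
    [NormedAddCommGroup X] [NormedSpace 𝕂 X] [CompleteSpace X]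
    [NormedAddCommGroup Y] [NormedSpace 𝕂 Y] [CompleteSpace Y]
    (E : InvSeqSpace 𝕂 X) (F : Γ → StrongInvSeqSpace 𝕂 Y) (f : X → Y)
    (hcomp : ∀ lam : Γ, Compatible 𝕂 f ((F lam).carrier : Set (ℕ → Y))) :
    Gset E f F = ∅ ∨
      ∃ W : Submodule 𝕂 (ℕ → X),
        (W : Set (ℕ → X)) ⊆ (E.carrier : Set (ℕ → X)) ∧
        ClosedIn E (W : Set (ℕ → X)) ∧
        Module.rank 𝕂 ↥W = Cardinal.continuum ∧
        (W : Set (ℕ → X)) ⊆ Gset E f F ∪ {0} :=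
  continuum_spaceable_Gset_general E F f hcomp
end

section
/- Let X be an infinite-dimensional Banach space over 𝕂 (= ℝ or ℂ), n ∈ ℕ, ε > 0, and φ₁, …, φ_n ∈ X* nonzero continuous linear functionals, and set A = {x ∈ X : |φ_i(x)| < ε for all i}. Then A is (α, dim X)-spaceable in X for every cardinal α < dim X: the subspace N = ⋂_{i=1}^n ker(φ_i) is closed, is contained in A, has dimension (linear rank) equal to dim X, and every linear subspace W_α ⊆ A with dim W_α = α < dim X is contained in N. -/
/-!
A linear functional that is bounded on a subspace vanishes on it, since the subspace is closed
under scaling; so every subspace inside `A` lies in `N = ⋂ᵢ ker φᵢ`. Conversely `N` is the kernel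
of the continuous map `x ↦ (φᵢ x)ᵢ` into `𝕂ⁿ`, hence closed, and by rank–nullity it has finite
codimension, so in the infinite-dimensional space `X` it has full rank.
-/

open Cardinal

theorem Submodule.le_ker_of_forall_norm_le {𝕜 E F : Type*} [NontriviallyNormedField 𝕜]
    [AddCommGroup E] [Module 𝕜 E] [NormedAddCommGroup F] [NormedSpace 𝕜 F]
    (f : E →ₗ[𝕜] F) (W : Submodule 𝕜 E) (C : ℝ) (hC : ∀ x ∈ W, ‖f x‖ ≤ C) :
    W ≤ LinearMap.ker f := by
  intro x hx
  by_contra hfx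
  have hpos : 0 < ‖f x‖ := norm_pos_iff.2 hfx
  obtain ⟨t, ht⟩ := NormedField.exists_lt_norm 𝕜 (C / ‖f x‖)
  have hbig : C < ‖f (t • x)‖ := by
    rw [map_smul, norm_smul]
    exact (div_lt_iff₀ hpos).1 ht
  exact (hC _ (W.smul_mem t hx)).not_gt hbig

theorem Submodule.rank_eq_of_finiteDimensional_quotient {K V : Type*} [DivisionRing K]
    [AddCommGroup V] [Module K V] (p : Submodule K V) [FiniteDimensional K (V ⧸ p)]
    (hV : ¬ FiniteDimensional K V) : Module.rank K p = Module.rank K V := by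
  have hV : ℵ₀ ≤ Module.rank K V := not_lt.1 (mt Module.rank_lt_aleph0_iff.1 hV)
  exact eq_of_add_eq_of_aleph0_le p.rank_quotient_add_rank
    ((Module.rank_lt_aleph0 K _).trans_le hV) hV

theorem weak_nbhd_alpha_dim_spaceable_general
    {𝕂 X : Type*} [RCLike 𝕂] [NormedAddCommGroup X] [NormedSpace 𝕂 X]
    (hinf : ¬ FiniteDimensional 𝕂 X)
    (n : ℕ) (ε : ℝ) (hε : 0 < ε)
    (φ : Fin n → X →L[𝕂] 𝕂)
    (A : Set X) (hA : A = {x : X | ∀ i, ‖φ i x‖ < ε})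
    (N : Submodule 𝕂 X) (hN : N = ⨅ i, LinearMap.ker (φ i : X →ₗ[𝕂] 𝕂)) :
    IsClosed (N : Set X) ∧
    (N : Set X) ⊆ A ∧
    Module.rank 𝕂 ↥N = Module.rank 𝕂 X ∧
    (∀ W : Submodule 𝕂 X, (W : Set X) ⊆ A →
      Module.rank 𝕂 ↥W < Module.rank 𝕂 X → W ≤ N) := by
  set Φ : X →L[𝕂] Fin n → 𝕂 := ContinuousLinearMap.pi φ
  have hN_ker : N = LinearMap.ker (Φ : X →ₗ[𝕂] Fin n → 𝕂) := by
    rw [hN, ContinuousLinearMap.coe_pi, LinearMap.ker_pi]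
  subst hA
  refine ⟨?_, ?_, ?_, ?_⟩
  · rw [hN_ker]
    exact Φ.isClosed_ker
  · intro x hx i
    rw [hN, SetLike.mem_coe, Submodule.mem_iInf] at hx
    rw [show φ i x = 0 from hx i, norm_zero]
    exact hε
  · rw [hN_ker]
    have : FiniteDimensional 𝕂 (X ⧸ LinearMap.ker (Φ : X →ₗ[𝕂] Fin n → 𝕂)) :=
      (Φ : X →ₗ[𝕂] Fin n → 𝕂).quotKerEquivRange.symm.finiteDimensional
    exact Submodule.rank_eq_of_finiteDimensional_quotient _ hinf
  · intro W hW _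
    rw [hN]
    exact le_iInf fun i ↦ W.le_ker_of_forall_norm_le _ ε fun x hx ↦ (hW hx i).le

/-- The basic weak neighborhood `A = {x : |φ_i(x)| < ε, i = 1, …, n}` is
`(α, dim X)`-spaceable for every `α < dim X`: the subspace `N = ⋂ᵢ ker φᵢ` is closed,
contained in `A`, has full dimension `dim X`, and every subspace `W ⊆ A` with
`dim W < dim X` is contained in `N`. -/
theorem weak_nbhd_alpha_dim_spaceable
    {𝕂 X : Type*} [RCLike 𝕂] [NormedAddCommGroup X] [NormedSpace 𝕂 X] [CompleteSpace X]
    (hinf : ¬ FiniteDimensional 𝕂 X)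
    (n : ℕ) (hn : 0 < n) (ε : ℝ) (hε : 0 < ε)
    (φ : Fin n → X →L[𝕂] 𝕂) (hφ : ∀ i, φ i ≠ 0)
    (A : Set X) (hA : A = {x : X | ∀ i, ‖φ i x‖ < ε})
    (N : Submodule 𝕂 X) (hN : N = ⨅ i, LinearMap.ker (φ i : X →ₗ[𝕂] 𝕂)) :
    IsClosed (N : Set X) ∧
    (N : Set X) ⊆ A ∧
    Module.rank 𝕂 ↥N = Module.rank 𝕂 X ∧
    (∀ W : Submodule 𝕂 X, (W : Set X) ⊆ A →
      Module.rank 𝕂 ↥W < Module.rank 𝕂 X → W ≤ N) :=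
  weak_nbhd_alpha_dim_spaceable_general hinf n ε hε φ A hA N hN
end

section
/- Let A = (ℝ² × {0}) ∪ {(1,1,1)} ⊆ ℝ³. Then A is (1,2)-lineable in ℝ³: A ∪ {0} contains a one-dimensional subspace, and every one-dimensional subspace W ⊆ A ∪ {0} is contained in a two-dimensional subspace contained in A ∪ {0}. However, there is no nonzero linear subspace W of ℝ³ with (1,1,1) ∈ W and W ⊆ A ∪ {0}; in particular A is not pointwise lineable in ℝ³ (even allowing finite-dimensional witnessing subspaces). -/
/-- `A = (ℝ² × {0}) ∪ {(1,1,1)}` is `(1,2)`-lineable in `ℝ³`, but no nonzero subspace `W`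
satisfies `(1,1,1) ∈ W ⊆ A ∪ {0}`; in particular `A` is not pointwise lineable. -/
theorem plane_union_point_one_two_lineable_not_pointwise
    (A : Set (Fin 3 → ℝ)) (hA : A = {v : Fin 3 → ℝ | v 2 = 0} ∪ {fun _ => (1 : ℝ)}) :
    (∃ W : Submodule ℝ (Fin 3 → ℝ),
      Module.rank ℝ ↥W = 1 ∧ (W : Set (Fin 3 → ℝ)) ⊆ A ∪ {0}) ∧
    (∀ W : Submodule ℝ (Fin 3 → ℝ),
      Module.rank ℝ ↥W = 1 → (W : Set (Fin 3 → ℝ)) ⊆ A ∪ {0} →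
      ∃ W₂ : Submodule ℝ (Fin 3 → ℝ), Module.rank ℝ ↥W₂ = 2 ∧ W ≤ W₂ ∧
        (W₂ : Set (Fin 3 → ℝ)) ⊆ A ∪ {0}) ∧
    (¬ ∃ W : Submodule ℝ (Fin 3 → ℝ),
      W ≠ ⊥ ∧ (fun _ => (1 : ℝ)) ∈ W ∧ (W : Set (Fin 3 → ℝ)) ⊆ A ∪ {0}) := by
  subst hA
  -- Key lemma: any submodule inside A ∪ {0} lies in the plane
  have key : ∀ W : Submodule ℝ (Fin 3 → ℝ),
      (W : Set (Fin 3 → ℝ)) ⊆ ({v : Fin 3 → ℝ | v 2 = 0} ∪ {fun _ => (1 : ℝ)}) ∪ {0} →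
      ∀ w ∈ W, w 2 = 0 := by
    intro W hW w hw
    rcases hW hw with (h | h) | h
    · exact h
    · exfalso
      have h2 : (2 : ℝ) • w ∈ W := W.smul_mem 2 hw
      have h' : w = fun _ => (1 : ℝ) := h
      rcases hW h2 with (hc | hc) | hc
      · have : ((2 : ℝ) • w) 2 = 0 := hc
        rw [h'] at this
        norm_num at this
      · have : ((2 : ℝ) • w) 2 = (1 : ℝ) := congrFun hc 2
        rw [h'] at this
        norm_num at this
      · have : ((2 : ℝ) • w) 2 = (0 : ℝ) := congrFun hc 2
        rw [h'] at this
        norm_num at this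
    · have : w = 0 := h
      rw [this]; rfl
  refine ⟨?_, ?_, ?_⟩
  · -- span of e₀
    have hne : (Pi.single 0 1 : Fin 3 → ℝ) ≠ 0 := by
      intro h
      have := congrFun h 0
      simp [Pi.single_eq_same] at this
    refine ⟨Submodule.span ℝ {(Pi.single 0 1 : Fin 3 → ℝ)}, ?_, ?_⟩
    · have hfr := finrank_span_singleton (K := ℝ) hne
      have := Module.finrank_eq_rank ℝ ↥(Submodule.span ℝ {(Pi.single 0 1 : Fin 3 → ℝ)})
      rw [hfr] at this
      rw [← this]; norm_num
    · intro x hx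
      rcases Submodule.mem_span_singleton.mp hx with ⟨c, rfl⟩
      left; left
      show (c • (Pi.single 0 1 : Fin 3 → ℝ)) 2 = 0
      simp [Pi.single_eq_of_ne (by decide : (2 : Fin 3) ≠ 0)]
  · intro W _ hWsub
    refine ⟨LinearMap.ker (LinearMap.proj 2 : (Fin 3 → ℝ) →ₗ[ℝ] ℝ), ?_, ?_, ?_⟩
    · have hsurj : Function.Surjective (LinearMap.proj 2 : (Fin 3 → ℝ) →ₗ[ℝ] ℝ) := by
        intro r; exact ⟨fun _ => r, rfl⟩
      have h1 := LinearMap.finrank_range_add_finrank_ker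
        (LinearMap.proj 2 : (Fin 3 → ℝ) →ₗ[ℝ] ℝ)
      rw [LinearMap.range_eq_top.mpr hsurj] at h1
      simp [finrank_top, Module.finrank_fintype_fun_eq_card] at h1
      have hfr : Module.finrank ℝ
          ↥(LinearMap.ker (LinearMap.proj 2 : (Fin 3 → ℝ) →ₗ[ℝ] ℝ)) = 2 := by omega
      have := Module.finrank_eq_rank ℝ
        ↥(LinearMap.ker (LinearMap.proj 2 : (Fin 3 → ℝ) →ₗ[ℝ] ℝ))
      rw [hfr] at this
      rw [← this]
      norm_num
    · intro w hw
      exact key W hWsub w hw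
    · intro x hx
      left; left
      exact hx
  · rintro ⟨W, -, hmem, hsub⟩
    have := key W hsub _ hmem
    norm_num at this
end

section
/- Let E be an invariant sequence space over a Banach space X with constant K as in condition (b1), and let x = (x_j)_{j=1}^∞ ∈ E have infinitely many nonzero coordinates. Let ℕ₁ ⊆ ℕ be such that ℕ₁ and ℕ∖ℕ₁ are both infinite and x_j ≠ 0 for at least one j ∈ ℕ₁, and let (ℕ_i)_{i=2}^∞ be a partition of ℕ∖ℕ₁ into pairwise disjoint infinite sets. Writing ℕ_i = {i_1 < i_2 < i_3 < ⋯}, define y₁ = x and, for i ≥ 2, y_i = Σ_{k=1}^∞ x_k ⊗ e_{i_k} (the X-valued sequence whose i_k-th coordinate is x_k and all of whose other coordinates are 0). Then: (i) each y_i belongs to E with ‖y_i‖_E ≤ K‖x⁰‖_E; (ii) the set {y_i : i ∈ ℕ} is linearly independent; (iii) for every (a_i)_{i=1}^∞ ∈ ℓ₁ the series Σ_{i=1}^∞ a_i y_i converges in E; and (iv) the resulting linear operator T : ℓ₁ → E, T((a_i)) = Σ_{i=1}^∞ a_i y_i, is injective. -/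
/-!
The vectors `y i` with `i ≥ 1` are `x` with zeros inserted, so they share the zero-free version
`x⁰`, which gives (i) through (b1). Each `y i` has a nonzero coordinate `j i ∈ A i`, and since
the `y b` with `b ≥ 1` are supported on the pairwise disjoint sets `A b`, `y b (j i) = 0` whenever
`i < b`. This triangularity determines the coefficients of any combination `∑ a_i y_i`
inductively from its coordinates `j 0, j 1, …`; by (b2), coordinates are continuous on `E`,
which gives (ii) and (iv). Finally `‖y i‖_E` is bounded, so the partial sums of `∑ a_i y_i` are
Cauchy for `a ∈ ℓ₁`, and (iii) follows from completeness of `E`.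
-/

open Filter Topology Finset

lemma zeroFree_eq_of_infinite {X : Type*} [Zero X] {x : ℕ → X}
    (h : {j | x j ≠ 0}.Infinite) :
    zeroFree x = fun k => x (Nat.nth (fun j => x j ≠ 0) k) :=
  if_pos h

lemma zeroFree_ne_zero {X : Type*} [Zero X] {x : ℕ → X} (h : {j | x j ≠ 0}.Infinite) :
    zeroFree x ≠ 0 := by
  rw [zeroFree_eq_of_infinite h]
  exact fun h0 => Nat.nth_mem_of_infinite h 0 (congrFun h0 0)

lemma zeroFree_comp_of_strictMono {X : Type*} [Zero X] {z : ℕ → X} {g : ℕ → ℕ}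
    (hg : StrictMono g) (hz : ∀ k ∉ Set.range g, z k = 0) :
    zeroFree (z ∘ g) = zeroFree z := by
  have hsupp : {k | z k ≠ 0} = g '' {i | (z ∘ g) i ≠ 0} := by
    ext k
    constructor
    · intro hk
      obtain ⟨i, rfl⟩ : k ∈ Set.range g := by_contra fun h => hk (hz k h)
      exact ⟨i, hk, rfl⟩
    · rintro ⟨i, hi, rfl⟩
      exact hi
  by_cases hinf : {i | (z ∘ g) i ≠ 0}.Infinite
  · have hinf' : {k | z k ≠ 0}.Infinite := hsupp ▸ hinf.image hg.injective.injOn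
    rw [zeroFree_eq_of_infinite hinf, zeroFree_eq_of_infinite hinf']
    funext n
    exact congrArg z (Nat.nth_comp_of_strictMono hg
      (fun k hk => by_contra fun h => hk (hz k h)) (fun hfin => absurd hfin hinf'))
  · have hfin' : ¬ {k | z k ≠ 0}.Infinite := by
      rwa [hsupp, Set.infinite_image_iff hg.injective.injOn]
    rw [zeroFree, zeroFree, if_neg hinf, if_neg hfin']

section Triangular

variable {R ι M : Type*} [Ring R] [AddCommGroup M] [Module R M]
  {y : ℕ → ι → M} {j : ℕ → ι}

lemma sum_range_apply_eq_of_triangular (htri : ∀ i b, i < b → y b (j i) = 0) (a : ℕ → R)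
    {i m : ℕ} (hm : i < m) :
    (∑ b ∈ range m, a b • y b) (j i) = ∑ b ∈ range (i + 1), a b • y b (j i) := by
  rw [Finset.sum_apply]
  refine (sum_subset (range_subset_range.2 hm) fun b _ hb => ?_).symm
  rw [Pi.smul_apply, htri i b (by simpa using hb), smul_zero]

variable [NoZeroSMulDivisors R M]

lemma eq_zero_of_triangular (hdiag : ∀ i, y i (j i) ≠ 0)
    (htri : ∀ i b, i < b → y b (j i) = 0) {a : ℕ → R}
    (h : ∀ i, ∀ᶠ m in atTop, (∑ b ∈ range m, a b • y b) (j i) = 0) : a = 0 := by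
  suffices ∀ i, a i = 0 from funext this
  intro i
  induction i using Nat.strong_induction_on with
  | _ i ih =>
    obtain ⟨m, hm0, hmi⟩ := ((h i).and (eventually_gt_atTop i)).exists
    rw [sum_range_apply_eq_of_triangular htri a hmi, sum_range_succ,
      sum_eq_zero fun b hb => by rw [ih b (mem_range.1 hb), zero_smul], zero_add] at hm0
    exact (eq_zero_or_eq_zero_of_smul_eq_zero hm0).resolve_right (hdiag i)

lemma linearIndependent_of_triangular (hdiag : ∀ i, y i (j i) ≠ 0)
    (htri : ∀ i b, i < b → y b (j i) = 0) : LinearIndependent R y := by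
  rw [linearIndependent_iff]
  intro l hl
  obtain ⟨N, hN⟩ := l.support.exists_nat_subset_range
  have hsum : ∀ m, N ≤ m → ∑ b ∈ range m, l b • y b = 0 := fun m hm => by
    rw [← hl, Finsupp.linearCombination_apply,
      Finsupp.sum_of_support_subset l (hN.trans (range_subset_range.2 hm)) (fun i c => c • y i)
        fun i _ => zero_smul R (y i)]
  exact DFunLike.coe_injective (eq_zero_of_triangular hdiag htri fun i =>
    eventually_atTop.2 ⟨N, fun m hm => by rw [hsum m hm, Pi.zero_apply]⟩)

lemma eq_zero_of_triangular_of_tendsto [TopologicalSpace M] [T2Space M]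
    (hdiag : ∀ i, y i (j i) ≠ 0) (htri : ∀ i b, i < b → y b (j i) = 0) {a : ℕ → R}
    (h : ∀ k, Tendsto (fun m => (∑ b ∈ range m, a b • y b) k) atTop (𝓝 0)) : a = 0 := by
  refine eq_zero_of_triangular hdiag htri fun i => ?_
  have hconst : (fun m => (∑ b ∈ range m, a b • y b) (j i)) =ᶠ[atTop]
      fun _ => ∑ b ∈ range (i + 1), a b • y b (j i) :=
    eventually_atTop.2 ⟨i + 1, fun m hm => sum_range_apply_eq_of_triangular htri a hm⟩
  have hlim := tendsto_nhds_unique tendsto_const_nhds ((h (j i)).congr' hconst)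
  exact hconst.mono fun m hm => hm.trans hlim

end Triangular

namespace InvSeqSpace

variable {𝕂 X : Type*} [RCLike 𝕂] [NormedAddCommGroup X] [NormedSpace 𝕂 X]
  (E : InvSeqSpace 𝕂 X)

lemma nrm_zero : E.nrm 0 = 0 :=
  (E.nrm_eq_zero_iff 0 E.carrier.zero_mem).2 rfl

lemma nrm_sub_comm {u v : ℕ → X} (hu : u ∈ E.carrier) (hv : v ∈ E.carrier) :
    E.nrm (u - v) = E.nrm (v - u) := by
  rw [← neg_sub, ← neg_one_smul 𝕂 (v - u), E.nrm_smul _ _ (E.carrier.sub_mem hv hu), norm_neg,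
    norm_one, one_mul]

lemma nrm_sum_smul_le {ι : Type*} {y : ι → ℕ → X} {C : ℝ} (hy : ∀ i, y i ∈ E.carrier)
    (hC : ∀ i, E.nrm (y i) ≤ C) (a : ι → 𝕂) (s : Finset ι) :
    E.nrm (∑ i ∈ s, a i • y i) ≤ ∑ i ∈ s, ‖a i‖ * C := by
  induction s using Finset.cons_induction with
  | empty => rw [sum_empty, sum_empty, E.nrm_zero]
  | cons i s _ ih =>
    rw [sum_cons, sum_cons]
    calc E.nrm (a i • y i + ∑ b ∈ s, a b • y b)
        ≤ E.nrm (a i • y i) + E.nrm (∑ b ∈ s, a b • y b) :=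
          E.nrm_add_le _ (E.carrier.smul_mem _ (hy i)) _
            (E.carrier.sum_mem fun b _ => E.carrier.smul_mem _ (hy b))
      _ ≤ ‖a i‖ * C + ∑ b ∈ s, ‖a b‖ * C := by
          rw [E.nrm_smul _ _ (hy i)]
          exact add_le_add (mul_le_mul_of_nonneg_left (hC i) (norm_nonneg _)) ih

lemma mem_and_nrm_le_of_zeroFree_eq {x z : ℕ → X} (hx : x ∈ E.carrier)
    (hxinf : {j | x j ≠ 0}.Infinite) (hzx : zeroFree z = zeroFree x) :
    z ∈ E.carrier ∧ E.nrm z ≤ E.K * E.nrm (zeroFree x) := by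
  have hz0 : zeroFree z ≠ 0 := hzx ▸ zeroFree_ne_zero hxinf
  have hz : z ∈ E.carrier :=
    (E.zeroFree_mem_iff z hz0).2 (hzx ▸ (E.zeroFree_mem_iff x (hzx ▸ hz0)).1 hx)
  exact ⟨hz, hzx ▸ E.nrm_le_K_mul z hz0 hz⟩

lemma exists_tendsto_sum_range_smul {y : ℕ → ℕ → X} {C : ℝ} (hy : ∀ i, y i ∈ E.carrier)
    (hC : ∀ i, E.nrm (y i) ≤ C) {a : ℕ → 𝕂} (ha : Summable fun i => ‖a i‖) :
    ∃ s ∈ E.carrier, ∀ ε : ℝ, 0 < ε → ∃ N, ∀ m, N ≤ m →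
      E.nrm ((∑ i ∈ range m, a i • y i) - s) < ε := by
  set u : ℕ → ℕ → X := fun m => ∑ i ∈ range m, a i • y i
  set t : ℕ → ℝ := fun m => ∑ i ∈ range m, ‖a i‖ * C
  have hu : ∀ m, u m ∈ E.carrier := fun m =>
    E.carrier.sum_mem fun i _ => E.carrier.smul_mem _ (hy i)
  have hle : ∀ {m n}, n ≤ m → E.nrm (u m - u n) ≤ dist (t m) (t n) := fun hnm => by
    rw [Real.dist_eq]
    refine le_trans ?_ (le_abs_self _)
    simp only [u, t, ← sum_Ico_eq_sub _ hnm]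
    exact E.nrm_sum_smul_le hy hC a _
  have hcauchy : ∀ ε : ℝ, 0 < ε → ∃ N, ∀ m ≥ N, ∀ n ≥ N, E.nrm (u m - u n) < ε := by
    intro ε hε
    obtain ⟨N, hN⟩ :=
      Metric.cauchySeq_iff.1 (ha.mul_right C).hasSum.tendsto_sum_nat.cauchySeq ε hε
    refine ⟨N, fun m hm n hn => ?_⟩
    rcases le_total n m with hnm | hmn
    · exact (hle hnm).trans_lt (hN m hm n hn)
    · rw [E.nrm_sub_comm (hu m) (hu n)]
      exact (hle hmn).trans_lt (hN n hn m hm)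
  exact E.complete u hu hcauchy

lemma tendsto_apply_of_nrm_lt {u : ℕ → ℕ → X} (hu : ∀ m, u m ∈ E.carrier)
    (h : ∀ ε : ℝ, 0 < ε → ∃ N, ∀ m, N ≤ m → E.nrm (u m) < ε) (k : ℕ) :
    Tendsto (fun m => u m k) atTop (𝓝 0) := by
  refine Metric.tendsto_atTop.2 fun ε hε => ?_
  obtain ⟨N, hN⟩ := h ε hε
  exact ⟨N, fun m hm => by
    rw [dist_zero_right]
    exact (E.coord_le_nrm _ (hu m) k).trans_lt (hN m hm)⟩

end InvSeqSpace

theorem mother_vector_operator_general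
    {𝕂 X : Type*} [RCLike 𝕂]
    [NormedAddCommGroup X] [NormedSpace 𝕂 X]
    (E : InvSeqSpace 𝕂 X)
    (x : ℕ → X) (hxE : x ∈ E.carrier) (hxinf : {j : ℕ | x j ≠ 0}.Infinite)
    (A : ℕ → Set ℕ) (hAinf : ∀ i, (A i).Infinite)
    (hAdisj : ∀ i j, i ≠ j → Disjoint (A i) (A j))
    (hA0x : ∃ j ∈ A 0, x j ≠ 0)
    (y : ℕ → (ℕ → X)) (hy0 : y 0 = x)
    (hy : ∀ i, 1 ≤ i →
      (∀ k, y i (Nat.nth (fun j => j ∈ A i) k) = x k) ∧ (∀ j, j ∉ A i → y i j = 0)) :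
    (∀ i, y i ∈ E.carrier ∧ E.nrm (y i) ≤ E.K * E.nrm (zeroFree x)) ∧
    LinearIndependent 𝕂 y ∧
    (∀ a : ℕ → 𝕂, Summable (fun i => ‖a i‖) →
      ∃ s ∈ E.carrier, ∀ ε : ℝ, 0 < ε → ∃ N, ∀ m, N ≤ m →
        E.nrm ((∑ i ∈ Finset.range m, a i • y i) - s) < ε) ∧
    (∀ a : ℕ → 𝕂, Summable (fun i => ‖a i‖) →
      (∀ ε : ℝ, 0 < ε → ∃ N, ∀ m, N ≤ m →
        E.nrm (∑ i ∈ Finset.range m, a i • y i) < ε) → a = 0) := by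
  obtain ⟨j₀, hj₀A, hj₀x⟩ := hA0x
  have hzeroFree : ∀ i, zeroFree (y i) = zeroFree x := by
    intro i
    rcases Nat.eq_zero_or_pos i with rfl | hi
    · rw [hy0]
    · rw [← zeroFree_comp_of_strictMono (Nat.nth_strictMono (hAinf i)) fun k hk =>
        (hy i hi).2 k (by rwa [Nat.range_nth_of_infinite (hAinf i)] at hk)]
      exact congrArg zeroFree (funext (hy i hi).1)
  have hbound := fun i => E.mem_and_nrm_le_of_zeroFree_eq hxE hxinf (hzeroFree i)
  have hwitness : ∀ i, ∃ k ∈ A i, y i k ≠ 0 := by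
    intro i
    rcases Nat.eq_zero_or_pos i with rfl | hi
    · exact ⟨j₀, hj₀A, hy0 ▸ hj₀x⟩
    · exact ⟨_, Nat.nth_mem_of_infinite (hAinf i) j₀, (hy i hi).1 j₀ ▸ hj₀x⟩
  choose j hjA hjy using hwitness
  have htri : ∀ i b, i < b → y b (j i) = 0 := fun i b hib =>
    (hy b (Nat.one_le_of_lt hib)).2 _ (Set.disjoint_left.1 (hAdisj i b hib.ne) (hjA i))
  refine ⟨hbound, linearIndependent_of_triangular hjy htri,
    fun a ha => E.exists_tendsto_sum_range_smul (fun i => (hbound i).1) (fun i => (hbound i).2) ha,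
    fun a _ h => eq_zero_of_triangular_of_tendsto hjy htri (E.tendsto_apply_of_nrm_lt ?_ h)⟩
  exact fun m => E.carrier.sum_mem fun i _ => E.carrier.smul_mem _ (hbound i).1

/-- The "mother vector" construction inside the proof of Theorem 3.2: with `ℕ₁ = A 0` and
`(A (i+1))_{i∈ℕ}` a partition of `ℕ∖ℕ₁` into infinite sets, `y 0 = x` and
`y i = Σ_k x_k ⊗ e_{i_k}` (supported on `A i`), one has: (i) `y i ∈ E` with
`‖y i‖_E ≤ K‖x⁰‖_E`; (ii) `(y i)` is linearly independent; (iii) `Σ a_i y_i` converges in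
`E` for every `(a_i) ∈ ℓ₁`; (iv) the operator `T : ℓ₁ → E`, `T(a) = Σ a_i y_i`, is
injective. -/
theorem mother_vector_operator
    {𝕂 X : Type*} [RCLike 𝕂]
    [NormedAddCommGroup X] [NormedSpace 𝕂 X] [CompleteSpace X]
    (E : InvSeqSpace 𝕂 X)
    (x : ℕ → X) (hxE : x ∈ E.carrier) (hxinf : {j : ℕ | x j ≠ 0}.Infinite)
    (A : ℕ → Set ℕ) (hAinf : ∀ i, (A i).Infinite)
    (hAdisj : ∀ i j, i ≠ j → Disjoint (A i) (A j))
    (hA0c : ((A 0)ᶜ : Set ℕ).Infinite)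
    (hA0x : ∃ j ∈ A 0, x j ≠ 0)
    (hAcover : (⋃ i, A (i + 1)) = (A 0)ᶜ)
    (y : ℕ → (ℕ → X)) (hy0 : y 0 = x)
    (hy : ∀ i, 1 ≤ i →
      (∀ k, y i (Nat.nth (fun j => j ∈ A i) k) = x k) ∧ (∀ j, j ∉ A i → y i j = 0)) :
    (∀ i, y i ∈ E.carrier ∧ E.nrm (y i) ≤ E.K * E.nrm (zeroFree x)) ∧
    LinearIndependent 𝕂 y ∧
    (∀ a : ℕ → 𝕂, Summable (fun i => ‖a i‖) →
      ∃ s ∈ E.carrier, ∀ ε : ℝ, 0 < ε → ∃ N, ∀ m, N ≤ m →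
        E.nrm ((∑ i ∈ Finset.range m, a i • y i) - s) < ε) ∧
    (∀ a : ℕ → 𝕂, Summable (fun i => ‖a i‖) →
      (∀ ε : ℝ, 0 < ε → ∃ N, ∀ m, N ≤ m →
        E.nrm (∑ i ∈ Finset.range m, a i • y i) < ε) → a = 0) :=
  mother_vector_operator_general E x hxE hxinf A hAinf hAdisj hA0x y hy0 hy
end

section
/- Let F be an invariant sequence space over the scalar field 𝕂 and let Y be a Banach space. If (x_j)_{j=1}^∞ ∈ F^w(Y), i.e., (φ(x_j))_{j=1}^∞ ∈ F for every continuous linear functional φ ∈ Y', then sup_{φ ∈ Y', ‖φ‖ ≤ 1} ‖(φ(x_j))_{j=1}^∞‖_F < ∞. -/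
/-!
The map `φ ↦ (φ (x j))_j` from the Banach space `Y'` into `F`, with `F` normed by `F.nrm`,
is linear, and its graph is closed: by (b2), convergence in `F` implies coordinatewise
convergence, and the coordinates `φ ↦ φ (x j)` are continuous. By the closed graph theorem
it is bounded, and its operator norm bounds `F.nrm (φ (x j))_j` on the unit ball of `Y'`.
-/

open Filter Topology

/-- A type synonym for `E.carrier`, so that it carries the norm `E.nrm` rather than the
product topology of `ℕ → X`. -/
def InvSeqSpace.Space_s14 {𝕂 X : Type*} [RCLike 𝕂] [NormedAddCommGroup X] [NormedSpace 𝕂 X]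
    (E : InvSeqSpace 𝕂 X) : Type _ :=
  E.carrier

namespace InvSeqSpace.Space_s14

variable {𝕂 X : Type*} [RCLike 𝕂] [NormedAddCommGroup X] [NormedSpace 𝕂 X] {E : InvSeqSpace 𝕂 X}

instance : AddCommGroup E.Space_s14 := inferInstanceAs (AddCommGroup E.carrier)
instance : Module 𝕂 E.Space_s14 := inferInstanceAs (Module 𝕂 E.carrier)

def seq (v : E.Space_s14) : ℕ → X := (show E.carrier from v).1

lemma seq_mem (v : E.Space_s14) : v.seq ∈ E.carrier := (show E.carrier from v).2

lemma seq_injective : Function.Injective (seq : E.Space_s14 → ℕ → X) :=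
  fun _ _ h => Subtype.ext h

@[simp] lemma seq_neg (v : E.Space_s14) : (-v).seq = -v.seq := rfl
@[simp] lemma seq_sub (v w : E.Space_s14) : (v - w).seq = v.seq - w.seq := rfl

variable (E) in
noncomputable def addGroupNorm : AddGroupNorm E.Space_s14 where
  toFun v := E.nrm v.seq
  map_zero' := (E.nrm_eq_zero_iff 0 E.carrier.zero_mem).mpr rfl
  add_le' v w := E.nrm_add_le v.seq v.seq_mem w.seq w.seq_mem
  neg' v := by simpa [neg_one_smul] using E.nrm_smul (-1) v.seq v.seq_mem
  eq_zero_of_map_eq_zero' v h := seq_injective ((E.nrm_eq_zero_iff v.seq v.seq_mem).mp h)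

noncomputable instance : NormedAddCommGroup E.Space_s14 := (addGroupNorm E).toNormedAddCommGroup

lemma norm_def (v : E.Space_s14) : ‖v‖ = E.nrm v.seq := rfl

noncomputable instance : NormedSpace 𝕂 E.Space_s14 :=
  ⟨fun a v => (E.nrm_smul a v.seq v.seq_mem).le⟩

instance : CompleteSpace E.Space_s14 := by
  refine Metric.complete_of_cauchySeq_tendsto fun u hu => ?_
  rw [Metric.cauchySeq_iff] at hu
  obtain ⟨v, hv, hlim⟩ := E.complete (fun n => (u n).seq) (fun n => (u n).seq_mem) fun ε hε => by
    obtain ⟨N, hN⟩ := hu ε hε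
    exact ⟨N, fun m hm n hn => by simpa [dist_eq_norm, norm_def] using hN m hm n hn⟩
  refine ⟨show E.carrier from ⟨v, hv⟩, Metric.tendsto_atTop.mpr fun ε hε => ?_⟩
  obtain ⟨N, hN⟩ := hlim ε hε
  exact ⟨N, fun n hn => (dist_eq_norm (u n) _).trans_lt (hN n hn)⟩

lemma lipschitzWith_seq_apply (j : ℕ) : LipschitzWith 1 fun v : E.Space_s14 => v.seq j :=
  LipschitzWith.of_dist_le_mul fun v w => by
    simpa [dist_eq_norm, norm_def] using E.coord_le_nrm (v - w).seq (v - w).seq_mem j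

lemma continuous_seq_apply (j : ℕ) : Continuous fun v : E.Space_s14 => v.seq j :=
  (lipschitzWith_seq_apply j).continuous

end InvSeqSpace.Space_s14

namespace InvSeqSpace

variable {𝕂 X V : Type*} [RCLike 𝕂] [NormedAddCommGroup X] [NormedSpace 𝕂 X]
  [NormedAddCommGroup V] [NormedSpace 𝕂 V] [CompleteSpace V]

theorem exists_nrm_le_mul_norm (E : InvSeqSpace 𝕂 X) (f : V →ₗ[𝕂] ℕ → X)
    (hf_mem : ∀ v, f v ∈ E.carrier) (hf_cont : ∀ j, Continuous fun v => f v j) :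
    ∃ C, 0 ≤ C ∧ ∀ v, E.nrm (f v) ≤ C * ‖v‖ := by
  let T : V →ₗ[𝕂] E.Space_s14 := f.codRestrict E.carrier hf_mem
  have hT_closed : ∀ (u : ℕ → V) v w, Tendsto u atTop (𝓝 v) → Tendsto (T ∘ u) atTop (𝓝 w) →
      w = T v := by
    intro u v w hu hTu
    exact Space_s14.seq_injective <| funext fun j => tendsto_nhds_unique
      (((Space_s14.continuous_seq_apply j).tendsto w).comp hTu) (((hf_cont j).tendsto v).comp hu)
  let T' := ContinuousLinearMap.ofSeqClosedGraph hT_closed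
  exact ⟨‖T'‖, T'.opNorm_nonneg, fun v => T'.le_opNorm v⟩

end InvSeqSpace

theorem weak_seq_norm_bounded_general
    {𝕂 Y : Type*} [RCLike 𝕂]
    [NormedAddCommGroup Y] [NormedSpace 𝕂 Y]
    (F : InvSeqSpace 𝕂 𝕂)
    (x : ℕ → Y) (hx : ∀ φ : Y →L[𝕂] 𝕂, (fun j => φ (x j)) ∈ F.carrier) :
    ∃ C : ℝ, ∀ φ : Y →L[𝕂] 𝕂, ‖φ‖ ≤ 1 → F.nrm (fun j => φ (x j)) ≤ C := by
  let f : (Y →L[𝕂] 𝕂) →ₗ[𝕂] ℕ → 𝕂 :=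
    { toFun := fun φ j => φ (x j)
      map_add' := fun _ _ => rfl
      map_smul' := fun _ _ => rfl }
  obtain ⟨C, hC, hbound⟩ := F.exists_nrm_le_mul_norm f hx fun j =>
    (ContinuousLinearMap.apply 𝕂 𝕂 (x j)).continuous
  refine ⟨C, fun φ hφ => ?_⟩
  calc F.nrm (fun j => φ (x j)) ≤ C * ‖φ‖ := hbound φ
    _ ≤ C := mul_le_of_le_one_right hC hφ

/-- If `F` is an invariant sequence space over `𝕂` and `(x_j) ∈ F^w(Y)`, then
`sup_{‖φ‖ ≤ 1} ‖(φ(x_j))_j‖_F < ∞`. -/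
theorem weak_seq_norm_bounded
    {𝕂 Y : Type*} [RCLike 𝕂]
    [NormedAddCommGroup Y] [NormedSpace 𝕂 Y] [CompleteSpace Y]
    (F : InvSeqSpace 𝕂 𝕂)
    (x : ℕ → Y) (hx : ∀ φ : Y →L[𝕂] 𝕂, (fun j => φ (x j)) ∈ F.carrier) :
    ∃ C : ℝ, ∀ φ : Y →L[𝕂] 𝕂, ‖φ‖ ≤ 1 → F.nrm (fun j => φ (x j)) ≤ C :=
  weak_seq_norm_bounded_general F x hx
end
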